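/- arXiv:0908.0670 — 6 statements merged into one kernel-verified Lean document; each statement's English description precedes it below -/
import Mathlib

section
/- For positive integers α and β and nonzero real numbers X, Y with X + Y ≠ 0, one has 1/(X^α · Y^β) = ∑_{τ=0}^{β-1} C(α-1+τ, τ) / ((X+Y)^{α+τ} · Y^{β-τ}) + ∑_{τ=0}^{α-1} C(β-1+τ, τ) / ((X+Y)^{β+τ} · X^{α-τ}). -/
/-!
Multiplying by `X ^ α * Y ^ β` and writing `w = X / (X + Y)`, `z = Y / (X + Y)`, the identity
becomes `w ^ α * ∑_{τ < β} C(α-1+τ, τ) z ^ τ + z ^ β * ∑_{τ < α} C(β-1+τ, τ) w ^ τ = 1` whenever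
`w + z = 1`: in a sequence of trials succeeding with probability `w`, either `α` successes come
before `β` failures or the reverse. This is proved by induction on `α` and `β`, via Pascal's rule,
from the geometric series in the case `α = 1`.
-/

open Finset

section NegativeBinomial

variable {R : Type*} [CommRing R]

theorem sum_range_choose_succ_mul_pow (a n : ℕ) (z : R) :
    ∑ τ ∈ range (n + 1), ((a + 1 + τ).choose τ : R) * z ^ τ =
      ∑ τ ∈ range (n + 1), ((a + τ).choose τ : R) * z ^ τ +
        z * ∑ τ ∈ range n, ((a + 1 + τ).choose τ : R) * z ^ τ := by
  have pascal : ∀ τ, ((a + 1 + (τ + 1)).choose (τ + 1) : R) * z ^ (τ + 1) =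
      ((a + (τ + 1)).choose (τ + 1) : R) * z ^ (τ + 1) +
        z * (((a + 1 + τ).choose τ : R) * z ^ τ) := by
    intro τ
    rw [show a + 1 + (τ + 1) = (a + 1 + τ) + 1 by omega, Nat.choose_succ_succ',
      show a + (τ + 1) = a + 1 + τ by omega]
    push_cast
    ring
  rw [sum_range_succ', sum_range_succ' (fun τ => ((a + τ).choose τ : R) * z ^ τ), mul_sum]
  simp only [pascal, sum_add_distrib, Nat.choose_zero_right]
  abel

theorem pow_mul_sum_choose_add_pow_mul_sum_choose_eq_one_zero (b : ℕ)
    {w z : R} (h : w + z = 1) :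
    w ^ (0 + 1) * ∑ τ ∈ range (b + 1), ((0 + τ).choose τ : R) * z ^ τ +
      z ^ (b + 1) * ∑ τ ∈ range (0 + 1), ((b + τ).choose τ : R) * w ^ τ = 1 := by
  simp only [zero_add, Nat.choose_self, Nat.cast_one, one_mul, pow_one, sum_range_one,
    pow_zero, Nat.choose_zero_right, mul_one]
  linear_combination (∑ τ ∈ range (b + 1), z ^ τ) * h - geom_sum_mul z (b + 1)

theorem pow_mul_sum_choose_add_pow_mul_sum_choose_eq_one (a b : ℕ)
    {w z : R} (h : w + z = 1) :
    w ^ (a + 1) * ∑ τ ∈ range (b + 1), ((a + τ).choose τ : R) * z ^ τ +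
      z ^ (b + 1) * ∑ τ ∈ range (a + 1), ((b + τ).choose τ : R) * w ^ τ = 1 := by
  induction a generalizing b with
  | zero => exact pow_mul_sum_choose_add_pow_mul_sum_choose_eq_one_zero b h
  | succ a iha =>
    induction b with
    | zero =>
      rw [add_comm]
      exact pow_mul_sum_choose_add_pow_mul_sum_choose_eq_one_zero _
        ((add_comm z w).trans h)
    | succ b ihb =>
      rw [sum_range_choose_succ_mul_pow a, sum_range_choose_succ_mul_pow b]
      linear_combination w * iha (b + 1) + z * ihb + h

end NegativeBinomial

theorem one_div_add_pow_mul_pow_sub {K : Type*} [Field K] {X Y : K} (hX : X ≠ 0) (hY : Y ≠ 0)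
    (a : ℕ) {b τ : ℕ} (hτ : τ ≤ b) :
    1 / ((X + Y) ^ (a + τ) * Y ^ (b - τ)) =
      (X / (X + Y)) ^ a * (Y / (X + Y)) ^ τ / (X ^ a * Y ^ b) := by
  rw [← pow_sub_mul_pow Y hτ, div_pow, div_pow, pow_add]
  field_simp

theorem partial_fraction_decomposition (α β : ℕ) (hα : 1 ≤ α) (hβ : 1 ≤ β)
    (X Y : ℝ) (hX : X ≠ 0) (hY : Y ≠ 0) (hXY : X + Y ≠ 0) :
    1 / (X ^ α * Y ^ β) =
      (∑ τ ∈ Finset.range β, (Nat.choose (α - 1 + τ) τ : ℝ) /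
        ((X + Y) ^ (α + τ) * Y ^ (β - τ))) +
      (∑ τ ∈ Finset.range α, (Nat.choose (β - 1 + τ) τ : ℝ) /
        ((X + Y) ^ (β + τ) * X ^ (α - τ))) := by
  obtain ⟨a, rfl⟩ := Nat.exists_eq_add_of_le' hα
  obtain ⟨b, rfl⟩ := Nat.exists_eq_add_of_le' hβ
  have hwz : X / (X + Y) + Y / (X + Y) = 1 := by rw [← add_div, div_self hXY]
  have first : ∀ τ ∈ range (b + 1), ((a + 1 - 1 + τ).choose τ : ℝ) /
      ((X + Y) ^ (a + 1 + τ) * Y ^ (b + 1 - τ)) = (X / (X + Y)) ^ (a + 1) *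
        (((a + τ).choose τ : ℝ) * (Y / (X + Y)) ^ τ) / (X ^ (a + 1) * Y ^ (b + 1)) := by
    intro τ hτ
    rw [div_eq_mul_one_div, one_div_add_pow_mul_pow_sub hX hY _ (mem_range.1 hτ).le]
    simp only [Nat.add_sub_cancel]
    ring
  have second : ∀ τ ∈ range (a + 1), ((b + 1 - 1 + τ).choose τ : ℝ) /
      ((X + Y) ^ (b + 1 + τ) * X ^ (a + 1 - τ)) = (Y / (X + Y)) ^ (b + 1) *
        (((b + τ).choose τ : ℝ) * (X / (X + Y)) ^ τ) / (X ^ (a + 1) * Y ^ (b + 1)) := by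
    intro τ hτ
    rw [div_eq_mul_one_div, add_comm X Y,
      one_div_add_pow_mul_pow_sub hY hX _ (mem_range.1 hτ).le]
    simp only [Nat.add_sub_cancel]
    ring
  rw [sum_congr rfl first, sum_congr rfl second, ← sum_div, ← sum_div, ← mul_sum, ← mul_sum,
    ← add_div, pow_mul_sum_choose_add_pow_mul_sum_choose_eq_one a b hwz]
end

section
/- For integers p, q ≥ 2, ζ(p)·ζ(q) = ∑_{τ=0}^{q-1} C(p-1+τ, τ) ζ(p+τ, q-τ) + ∑_{τ=0}^{p-1} C(q-1+τ, τ) ζ(q+τ, p-τ). -/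
/-- The Riemann zeta value `ζ(p) = ∑_{n ≥ 1} n^{-p}`. -/
noncomputable def zeta1 (p : ℕ) : ℝ := ∑' n : ℕ, 1 / ((n : ℝ) + 1) ^ p

/-- The double zeta value `ζ(p, q) = ∑_{m > n > 0} m^{-p} n^{-q}`,
parametrized by `m = a + b + 2`, `n = b + 1`. -/
noncomputable def zeta2 (p q : ℕ) : ℝ :=
  ∑' (a : ℕ) (b : ℕ), 1 / (((a : ℝ) + (b : ℝ) + 2) ^ p * ((b : ℝ) + 1) ^ q)

/-!
With `u = 1/m`, `v = 1/n`, `w = 1/(m+n)` one has `u v = w (u + v)`. Iterating this relation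
expands `u^p v^q` into monomials `w^(p+i) v^(q-i)` and `w^(q+j) u^(p-j)`, whose coefficients
obey Pascal's rule and hence are the binomial coefficients `C(p-1+i, i)` and `C(q-1+j, j)`.
Summing over all pairs `(m, n)` turns the monomials into double zeta values (those in `u`
after exchanging `m` and `n`). All terms are nonnegative, so each of them is summable because
`ζ(p) ζ(q)` is, and the double sum can be split term by term.
-/

open Finset

section EulerSum

variable {R : Type*} [CommRing R]

def eulerSum (w v : R) (p q : ℕ) : R :=
  ∑ i ∈ range (q + 1), ((p + i).choose i : R) * (w ^ (p + 1 + i) * v ^ (q + 1 - i))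

theorem mul_eulerSum_add_eulerSum (w v : R) (p q : ℕ) :
    w * (eulerSum w v p (q + 1) + eulerSum w v (p + 1) q) = eulerSum w v (p + 1) (q + 1) := by
  rw [eulerSum, eulerSum, eulerSum, sum_range_succ' _ (q + 1), sum_range_succ' _ (q + 1),
    mul_add, mul_add, mul_sum, mul_sum, add_right_comm, ← sum_add_distrib]
  congr 1
  · refine sum_congr rfl fun i _ => ?_
    rw [show q + 1 + 1 - (i + 1) = q + 1 - i by omega, show p + 1 + (i + 1) = p + 1 + i + 1 by ring,
      Nat.choose_succ_succ', Nat.cast_add, show p + (i + 1) = p + 1 + i by ring]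
    ring
  · simp only [add_zero, Nat.choose_zero_right, Nat.cast_one, Nat.sub_zero]
    ring

theorem mul_pow_succ_eq_eulerSum {u v w : R} (h : u * v = w * (u + v)) (q : ℕ) :
    u * v ^ (q + 1) = eulerSum w v 0 q + eulerSum w u q 0 := by
  induction q with
  | zero =>
    simp only [zero_add, pow_one, eulerSum, range_one, Nat.choose_self, Nat.cast_one, one_mul,
      sum_singleton, add_zero, tsub_zero]
    linear_combination h
  | succ q ih =>
    have hv : eulerSum w v 0 (q + 1) = w * v ^ (q + 2) + w * eulerSum w v 0 q := by
      rw [eulerSum, eulerSum, sum_range_succ', mul_sum, add_comm]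
      congr 1
      · simp
      · refine sum_congr rfl fun i _ => ?_
        rw [show q + 1 + 1 - (i + 1) = q + 1 - i by omega]
        simp only [zero_add, Nat.choose_self, Nat.cast_one, one_mul]
        ring
    have hu : eulerSum w u (q + 1) 0 = w * eulerSum w u q 0 := by
      simp only [eulerSum, zero_add, range_one, sum_singleton, add_zero, Nat.choose_zero_right,
        Nat.cast_one, tsub_zero, pow_one, one_mul]
      ring
    rw [hv, hu]
    linear_combination w * ih + v ^ (q + 1) * h

theorem pow_mul_pow_eq_eulerSum {u v w : R} (h : u * v = w * (u + v)) (p q : ℕ) :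
    u ^ (p + 1) * v ^ (q + 1) = eulerSum w v p q + eulerSum w u q p := by
  induction p generalizing q with
  | zero => simpa using mul_pow_succ_eq_eulerSum h q
  | succ p ihp =>
    induction q with
    | zero =>
      rw [zero_add, pow_one, mul_comm]
      exact (mul_pow_succ_eq_eulerSum (by linear_combination h) (p + 1)).trans (add_comm _ _)
    | succ q ihq =>
      calc u ^ (p + 2) * v ^ (q + 2)
          = w * (u ^ (p + 1) * v ^ (q + 2) + u ^ (p + 2) * v ^ (q + 1)) := by
            linear_combination u ^ (p + 1) * v ^ (q + 1) * h
        _ = w * (eulerSum w v p (q + 1) + eulerSum w v (p + 1) q) +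
              w * (eulerSum w u q (p + 1) + eulerSum w u (q + 1) p) := by
            rw [ihp, ihq]; ring
        _ = eulerSum w v (p + 1) (q + 1) + eulerSum w u (q + 1) (p + 1) := by
            rw [mul_eulerSum_add_eulerSum, mul_eulerSum_add_eulerSum]

end EulerSum

section FiniteCombination

variable {ι α : Type*} {s : Finset ι} {c : ι → ℝ} {f : ι → α → ℝ}

theorem Summable.of_finsetSum_mul_of_nonneg (h : Summable fun a => ∑ i ∈ s, c i * f i a)
    (hc : ∀ i ∈ s, 0 < c i) (hf : ∀ i ∈ s, 0 ≤ f i) {i : ι} (hi : i ∈ s) : Summable (f i) := by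
  have hcf : ∀ j ∈ s, 0 ≤ fun a => c j * f j a := fun j hj a => mul_nonneg (hc j hj).le (hf j hj a)
  refine (summable_mul_left_iff (hc i hi).ne').mp (h.of_nonneg_of_le (hcf i hi) fun a => ?_)
  exact single_le_sum (f := fun j => c j * f j a) (fun j hj => hcf j hj a) hi

theorem tsum_finsetSum_mul (hf : ∀ i ∈ s, Summable (f i)) :
    ∑' a, ∑ i ∈ s, c i * f i a = ∑ i ∈ s, c i * ∑' a, f i a := by
  rw [Summable.tsum_finsetSum fun i hi => (hf i hi).mul_left (c i)]
  simp_rw [tsum_mul_left]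

end FiniteCombination

noncomputable def zeta2Term (p q : ℕ) (z : ℕ × ℕ) : ℝ :=
  ((z.1 + z.2 + 2 : ℝ)⁻¹) ^ p * ((z.2 + 1 : ℝ)⁻¹) ^ q

theorem zeta2Term_nonneg (p q : ℕ) : 0 ≤ zeta2Term p q := fun z => by
  unfold zeta2Term; positivity

theorem zeta2_eq_tsum {p q : ℕ} (h : Summable (zeta2Term p q)) :
    zeta2 p q = ∑' z, zeta2Term p q z := by
  rw [h.tsum_prod, zeta2]
  simp only [zeta2Term, one_div, mul_inv, inv_pow]

theorem zeta2_eq_tsum_swap {p q : ℕ} (h : Summable fun z : ℕ × ℕ => zeta2Term p q z.swap) :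
    zeta2 p q = ∑' z : ℕ × ℕ, zeta2Term p q z.swap := by
  rw [zeta2_eq_tsum h.prod_symm]
  exact ((Equiv.prodComm ℕ ℕ).tsum_eq (zeta2Term p q)).symm

theorem zeta1_eq_tsum (p : ℕ) : zeta1 p = ∑' n : ℕ, ((n + 1 : ℝ)⁻¹) ^ p := by
  simp [zeta1, inv_pow]

theorem summable_inv_natCast_add_one_pow {p : ℕ} (hp : 2 ≤ p) :
    Summable fun n : ℕ => ((n + 1 : ℝ)⁻¹) ^ p := by
  simpa [inv_pow] using (summable_nat_add_iff 1).mpr (Real.summable_nat_pow_inv.mpr hp)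

theorem summable_inv_natCast_add_one_pow_mul {p q : ℕ} (hp : 2 ≤ p) (hq : 2 ≤ q) :
    Summable fun z : ℕ × ℕ => ((z.1 + 1 : ℝ)⁻¹) ^ p * ((z.2 + 1 : ℝ)⁻¹) ^ q :=
  (summable_inv_natCast_add_one_pow hp).mul_of_nonneg (summable_inv_natCast_add_one_pow hq)
    (fun _ => by positivity) (fun _ => by positivity)

theorem zeta1_mul_zeta1 {p q : ℕ} (hp : 2 ≤ p) (hq : 2 ≤ q) :
    zeta1 p * zeta1 q = ∑' z : ℕ × ℕ, ((z.1 + 1 : ℝ)⁻¹) ^ p * ((z.2 + 1 : ℝ)⁻¹) ^ q := by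
  rw [zeta1_eq_tsum, zeta1_eq_tsum]
  exact (summable_inv_natCast_add_one_pow hp).tsum_mul_tsum (summable_inv_natCast_add_one_pow hq)
    (summable_inv_natCast_add_one_pow_mul hp hq)

theorem inv_pow_mul_inv_pow_eq_sum_zeta2Term (p q : ℕ) (z : ℕ × ℕ) :
    ((z.1 + 1 : ℝ)⁻¹) ^ (p + 1) * ((z.2 + 1 : ℝ)⁻¹) ^ (q + 1) =
      ∑ i ∈ range (q + 1), ((p + i).choose i : ℝ) * zeta2Term (p + 1 + i) (q + 1 - i) z +
      ∑ j ∈ range (p + 1), ((q + j).choose j : ℝ) * zeta2Term (q + 1 + j) (p + 1 - j) z.swap := by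
  have hrel : (z.1 + 1 : ℝ)⁻¹ * (z.2 + 1 : ℝ)⁻¹ =
      (z.1 + z.2 + 2 : ℝ)⁻¹ * ((z.1 + 1 : ℝ)⁻¹ + (z.2 + 1 : ℝ)⁻¹) := by
    field_simp
    ring
  rw [pow_mul_pow_eq_eulerSum hrel, eulerSum, eulerSum]
  simp only [zeta2Term, Prod.fst_swap, Prod.snd_swap, add_comm (z.2 : ℝ) z.1]

theorem euler_decomposition (p q : ℕ) (hp : 2 ≤ p) (hq : 2 ≤ q) :
    zeta1 p * zeta1 q =
      (∑ τ ∈ Finset.range q, (Nat.choose (p - 1 + τ) τ : ℝ) * zeta2 (p + τ) (q - τ)) +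
      (∑ τ ∈ Finset.range p, (Nat.choose (q - 1 + τ) τ : ℝ) * zeta2 (q + τ) (p - τ)) := by
  obtain ⟨p, rfl⟩ : ∃ p', p = p' + 1 := ⟨p - 1, by omega⟩
  obtain ⟨q, rfl⟩ : ∃ q', q = q' + 1 := ⟨q - 1, by omega⟩
  have hsplit := summable_inv_natCast_add_one_pow_mul hp hq
  simp only [inv_pow_mul_inv_pow_eq_sum_zeta2Term] at hsplit
  have hA := hsplit.of_nonneg_of_le (fun z => by simp only [zeta2Term]; positivity)
    (fun z => le_add_of_nonneg_right (by simp only [zeta2Term]; positivity))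
  have hB := hsplit.of_nonneg_of_le (fun z => by simp only [zeta2Term]; positivity)
    (fun z => le_add_of_nonneg_left (by simp only [zeta2Term]; positivity))
  have hchoose (n k : ℕ) : (0 : ℝ) < (n + k).choose k :=
    mod_cast Nat.choose_pos (Nat.le_add_left k n)
  have hAi : ∀ i ∈ range (q + 1), Summable (zeta2Term (p + 1 + i) (q + 1 - i)) := fun i hi =>
    hA.of_finsetSum_mul_of_nonneg (fun _ _ => hchoose _ _) (fun _ _ => zeta2Term_nonneg _ _) hi
  have hBj : ∀ j ∈ range (p + 1),
      Summable fun z : ℕ × ℕ => zeta2Term (q + 1 + j) (p + 1 - j) z.swap := fun j hj =>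
    hB.of_finsetSum_mul_of_nonneg (fun _ _ => hchoose _ _)
      (fun _ _ z => zeta2Term_nonneg _ _ z.swap) hj
  rw [zeta1_mul_zeta1 hp hq, tsum_congr (inv_pow_mul_inv_pow_eq_sum_zeta2Term p q),
    hA.tsum_add hB, tsum_finsetSum_mul hAi, tsum_finsetSum_mul hBj]
  simp only [Nat.add_sub_cancel]
  congr 1 <;> refine sum_congr rfl fun i hi => ?_
  · rw [zeta2_eq_tsum (hAi i hi)]
  · rw [zeta2_eq_tsum_swap (hBj i hi)]
end

section
/- For integers p, r ≥ 2 and q ≥ 1, ζ(p)·ζ(r, q) = ∑_{i=0}^{r-1} C(p-1+i, i) ∑_{l,m,n≥1} 1/((l+m+n)^{p+i} (m+n)^{r-i} m^q) + ∑_{i=0}^{p-1} C(r-1+i, i) ∑_{l,m,n≥1} 1/((l+m+n)^{r+i} l^{p-i} m^q). -/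
/-!
For `u + v = 1`, the probabilities that the `p`-th success of a Bernoulli(`u`) sequence comes
before the `r`-th failure, and vice versa, add up to one:
`∑_{i<r} C(p-1+i, i) uᵖ vⁱ + ∑_{i<p} C(r-1+i, i) vʳ uⁱ = 1`.
With `u = x/(x+y)`, `v = y/(x+y)` this is the partial fraction decomposition of `1/(xᵖ yʳ)`.
Expanding `ζ(p) ζ(r, q)` as a triple sum over `l, m, n ≥ 1` of `1/(lᵖ (m+n)ʳ mᵠ)`, apply it with
`x = l`, `y = m + n`; all terms are nonnegative, so the triple sum may be split termwise and
each piece summed iteratively.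
-/

open Finset

section BinomialIdentity

variable {R : Type*} [CommRing R] {u v : R}

theorem sum_choose_succ_mul_pow_mul (huv : u + v = 1) (r p : ℕ) :
    ∑ i ∈ range (p + 1), ((r + 1 + i).choose i : R) * u ^ i * v =
      ∑ i ∈ range (p + 1), ((r + i).choose i : R) * u ^ i -
        ((r + 1 + p).choose p : R) * u ^ (p + 1) := by
  obtain rfl : v = 1 - u := by rw [← huv]; ring
  induction p with
  | zero => simp
  | succ p ih =>
    rw [sum_range_succ _ (p + 1), ih, sum_range_succ _ (p + 1),
      show r + (p + 1) = r + 1 + p by ring, show r + 1 + (p + 1) = r + 1 + p + 1 by ring,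
      Nat.choose_succ_succ']
    push_cast
    ring

theorem sum_choose_mul_pow_add_sum_choose_mul_pow (huv : u + v = 1) (p r : ℕ) :
    ∑ i ∈ range (r + 1), ((p + i).choose i : R) * v ^ i * u ^ (p + 1) +
      ∑ i ∈ range (p + 1), ((r + i).choose i : R) * u ^ i * v ^ (r + 1) = 1 := by
  induction r with
  | zero =>
    simp only [zero_add, Nat.choose_self, Nat.choose_zero_right, Nat.cast_one, one_mul, pow_one,
      sum_range_one, pow_zero, ← sum_mul]
    obtain rfl : v = 1 - u := by rw [← huv]; ring
    rw [mul_comm, mul_neg_geom_sum]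
    ring
  | succ r ih =>
    have hsymm : (p + (r + 1)).choose (r + 1) = (r + 1 + p).choose p := by
      rw [add_comm p, Nat.choose_symm_add]
    have hshift : ∑ i ∈ range (p + 1), ((r + 1 + i).choose i : R) * u ^ i * v ^ (r + 1 + 1) =
        (∑ i ∈ range (p + 1), ((r + 1 + i).choose i : R) * u ^ i * v) * v ^ (r + 1) := by
      rw [sum_mul]
      exact sum_congr rfl fun i _ => by ring
    rw [sum_range_succ, hsymm, hshift, sum_choose_succ_mul_pow_mul huv, ← ih, sub_mul, sum_mul]
    ring

end BinomialIdentity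

theorem one_div_pow_mul_pow_eq_sum {K : Type*} [Field K] {x y : K} (hx : x ≠ 0) (hy : y ≠ 0)
    (hxy : x + y ≠ 0) {α β : ℕ} (hα : α ≠ 0) (hβ : β ≠ 0) :
    1 / (x ^ α * y ^ β) =
      ∑ i ∈ range β, ((α - 1 + i).choose i : K) * (1 / ((x + y) ^ (α + i) * y ^ (β - i))) +
      ∑ i ∈ range α, ((β - 1 + i).choose i : K) * (1 / ((x + y) ^ (β + i) * x ^ (α - i))) := by
  obtain ⟨p, rfl⟩ : ∃ p, α = p + 1 := ⟨α - 1, by omega⟩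
  obtain ⟨r, rfl⟩ : ∃ r, β = r + 1 := ⟨β - 1, by omega⟩
  have key := congrArg (1 / (x ^ (p + 1) * y ^ (r + 1)) * ·)
    (sum_choose_mul_pow_add_sum_choose_mul_pow (u := x / (x + y)) (v := y / (x + y))
      (by field_simp) p r)
  rw [mul_one] at key
  rw [← key, mul_add, mul_sum, mul_sum, Nat.add_sub_cancel, Nat.add_sub_cancel]
  congr 1 <;> refine sum_congr rfl fun i hi => ?_
  · rw [← Nat.sub_add_cancel (mem_range.1 hi).le, pow_add y, Nat.add_sub_cancel, div_pow, div_pow]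
    field_simp
    ring
  · rw [← Nat.sub_add_cancel (mem_range.1 hi).le, pow_add x, Nat.add_sub_cancel, div_pow, div_pow]
    field_simp
    ring

theorem Summable.tsum_prod_prod {α β γ G : Type*} [AddCommGroup G] [UniformSpace G]
    [IsUniformAddGroup G] [CompleteSpace G] [T0Space G] {f : α × β × γ → G} (hf : Summable f) :
    ∑' x, f x = ∑' (a) (b) (c), f (a, b, c) := by
  rw [hf.tsum_prod]
  exact tsum_congr fun a => (hf.prod_factor a).tsum_prod

theorem Summable.of_sum_mul_le {ι κ : Type*} {f : ι → ℝ} {s : Finset κ} {c : κ → ℝ}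
    {g : κ → ι → ℝ} (hf : Summable f) (hc : ∀ k ∈ s, 1 ≤ c k) (hg : ∀ k ∈ s, 0 ≤ g k)
    (hfg : ∀ x, ∑ k ∈ s, c k * g k x ≤ f x) : ∀ k ∈ s, Summable (g k) := fun k hk =>
  hf.of_nonneg_of_le (hg k hk) fun x => calc
    g k x ≤ c k * g k x := le_mul_of_one_le_left (hg k hk x) (hc k hk)
    _ ≤ ∑ j ∈ s, c j * g j x :=
      single_le_sum (fun j hj => mul_nonneg (zero_le_one.trans (hc j hj)) (hg j hj x)) hk
    _ ≤ f x := hfg x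

theorem summable_one_div_add_one_rpow {s : ℝ} (hs : 1 < s) :
    Summable fun n : ℕ => 1 / ((n : ℝ) + 1) ^ s :=
  ((Real.summable_one_div_nat_add_rpow 1 s).2 hs).congr fun n => by
    rw [abs_of_pos (by positivity)]

theorem summable_one_div_add_one_pow {p : ℕ} (hp : 2 ≤ p) :
    Summable fun n : ℕ => 1 / ((n : ℝ) + 1) ^ p := by
  simpa only [Real.rpow_natCast] using summable_one_div_add_one_rpow (s := p) (by norm_cast)

theorem summable_zeta2_summand {r q : ℕ} (hr : 2 ≤ r) (hq : 1 ≤ q) :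
    Summable fun w : ℕ × ℕ => 1 / (((w.1 : ℝ) + w.2 + 2) ^ r * ((w.2 : ℝ) + 1) ^ q) := by
  -- `(a+b+2)⁴ ≥ (a+1)³ (b+1)` bounds each summand by `((a+1)(b+1))^(-3/2)`.
  have h := summable_one_div_add_one_rpow (s := 3 / 2) (by norm_num)
  refine (h.mul_of_nonneg h (fun _ => by positivity) (fun _ => by positivity)).of_nonneg_of_le
    (fun _ => by positivity) fun ⟨a, b⟩ => ?_
  dsimp only
  rw [one_div_mul_one_div, ← Real.mul_rpow (by positivity) (by positivity)]
  gcongr 1 / ?_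
  have hsq : (((a + 1) * (b + 1) : ℝ) ^ (3 / 2 : ℝ)) ^ 2 = ((a + 1) * (b + 1) : ℝ) ^ 3 := by
    rw [← Real.rpow_natCast, ← Real.rpow_mul (by positivity)]
    norm_num
  calc ((a + 1) * (b + 1) : ℝ) ^ (3 / 2 : ℝ) ≤ ((a : ℝ) + b + 2) ^ 2 * ((b : ℝ) + 1) ^ 1 := by
        refine le_of_pow_le_pow_left₀ two_ne_zero (by positivity) ?_
        calc (((a + 1) * (b + 1) : ℝ) ^ (3 / 2 : ℝ)) ^ 2
            = ((a : ℝ) + 1) ^ 3 * (b + 1) * (b + 1) ^ 2 := by rw [hsq]; ring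
          _ ≤ ((a : ℝ) + b + 2) ^ 3 * ((a : ℝ) + b + 2) * (b + 1) ^ 2 := by gcongr <;> linarith
          _ = (((a : ℝ) + b + 2) ^ 2 * ((b : ℝ) + 1) ^ 1) ^ 2 := by ring
    _ ≤ ((a : ℝ) + b + 2) ^ r * ((b : ℝ) + 1) ^ q := by
        gcongr <;> linarith

theorem hasSum_zeta1_mul_zeta2 {p r q : ℕ} (hp : 2 ≤ p) (hr : 2 ≤ r) (hq : 1 ≤ q) :
    HasSum (fun v : ℕ × ℕ × ℕ => 1 / ((v.1 : ℝ) + 1) ^ p *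
      (1 / (((v.2.2 : ℝ) + v.2.1 + 2) ^ r * ((v.2.1 : ℝ) + 1) ^ q))) (zeta1 p * zeta2 r q) := by
  have hf := summable_one_div_add_one_pow hp
  have hg := summable_zeta2_summand hr hq
  have hzeta2 : zeta2 r q = ∑' w : ℕ × ℕ, 1 / (((w.2 : ℝ) + w.1 + 2) ^ r * ((w.1 : ℝ) + 1) ^ q) :=
    hg.tsum_prod.symm.trans ((Equiv.prodComm ℕ ℕ).tsum_eq _).symm
  rw [zeta1, hzeta2]
  have hfg := hf.mul_of_nonneg hg.prod_symm (fun _ => by positivity) (fun _ => by positivity)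
  exact (hf.hasSum.mul hg.prod_symm.hasSum hfg :)

theorem zeta1_mul_zeta2_summand_eq (p r q : ℕ) (hp : p ≠ 0) (hr : r ≠ 0) (l m n : ℕ) :
    1 / ((l : ℝ) + 1) ^ p * (1 / (((n : ℝ) + m + 2) ^ r * ((m : ℝ) + 1) ^ q)) =
      ∑ i ∈ range r, ((p - 1 + i).choose i : ℝ) *
        (1 / (((l : ℝ) + m + n + 3) ^ (p + i) * ((m : ℝ) + n + 2) ^ (r - i) * ((m : ℝ) + 1) ^ q)) +
      ∑ i ∈ range p, ((r - 1 + i).choose i : ℝ) *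
        (1 / (((l : ℝ) + m + n + 3) ^ (r + i) * ((l : ℝ) + 1) ^ (p - i) * ((m : ℝ) + 1) ^ q)) := by
  have hpf := one_div_pow_mul_pow_eq_sum (x := (l : ℝ) + 1) (y := (m : ℝ) + n + 2)
    (by positivity) (by positivity) (by positivity) hp hr
  rw [show (l : ℝ) + 1 + (m + n + 2) = l + m + n + 3 by ring] at hpf
  calc 1 / ((l : ℝ) + 1) ^ p * (1 / (((n : ℝ) + m + 2) ^ r * ((m : ℝ) + 1) ^ q))
      = 1 / (((l : ℝ) + 1) ^ p * ((m : ℝ) + n + 2) ^ r) * (1 / ((m : ℝ) + 1) ^ q) := by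
        ring
    _ = _ := by
        simp only [hpf, add_mul, sum_mul, mul_assoc, one_div_mul_one_div]

theorem shuffle_decomposition_A3 (p r q : ℕ) (hp : 2 ≤ p) (hr : 2 ≤ r) (hq : 1 ≤ q) :
    zeta1 p * zeta2 r q =
      (∑ i ∈ Finset.range r, (Nat.choose (p - 1 + i) i : ℝ) *
        ∑' (l : ℕ) (m : ℕ) (n : ℕ),
          1 / (((l : ℝ) + (m : ℝ) + (n : ℝ) + 3) ^ (p + i) *
               ((m : ℝ) + (n : ℝ) + 2) ^ (r - i) * ((m : ℝ) + 1) ^ q)) +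
      (∑ i ∈ Finset.range p, (Nat.choose (r - 1 + i) i : ℝ) *
        ∑' (l : ℕ) (m : ℕ) (n : ℕ),
          1 / (((l : ℝ) + (m : ℝ) + (n : ℝ) + 3) ^ (r + i) *
               ((l : ℝ) + 1) ^ (p - i) * ((m : ℝ) + 1) ^ q)) := by
  have hF := hasSum_zeta1_mul_zeta2 hp hr hq
  have hsplit (v : ℕ × ℕ × ℕ) :=
    zeta1_mul_zeta2_summand_eq p r q (by omega) (by omega) v.1 v.2.1 v.2.2
  have hA := hF.summable.of_sum_mul_le (fun i _ => Nat.one_le_cast.2 (Nat.choose_pos (by omega)))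
    (fun i _ v => by positivity) fun v => (hsplit v).symm ▸ le_add_of_nonneg_right
      (sum_nonneg fun i _ => by positivity)
  have hB := hF.summable.of_sum_mul_le (fun i _ => Nat.one_le_cast.2 (Nat.choose_pos (by omega)))
    (fun i _ v => by positivity) fun v => (hsplit v).symm ▸ le_add_of_nonneg_left
      (sum_nonneg fun i _ => by positivity)
  rw [← hF.tsum_eq, tsum_congr hsplit,
    Summable.tsum_add (summable_sum fun i hi => (hA i hi).mul_left _)
      (summable_sum fun i hi => (hB i hi).mul_left _),
    Summable.tsum_finsetSum fun i hi => (hA i hi).mul_left _,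
    Summable.tsum_finsetSum fun i hi => (hB i hi).mul_left _]
  congr 1 <;> refine sum_congr rfl fun i hi => ?_
  · rw [tsum_mul_left, (hA i hi).tsum_prod_prod]
  · rw [tsum_mul_left, (hB i hi).tsum_prod_prod]
end

section
/- In the non-commutative polynomial algebra ℚ⟨x, y⟩ with the shuffle product ш defined recursively by 1 ш w = w ш 1 = w and (u₁ w₁) ш (u₂ w₂) = u₁(w₁ ш u₂ w₂) + u₂(u₁ w₁ ш w₂) for letters u₁, u₂ ∈ {x, y}, writing z_p = x^{p-1} y, one has for all positive integers a, b and all positive integers p₁, …, p_a, q₁, …, q_b: z_{p_a} ⋯ z_{p_1} ш z_{q_b} ⋯ z_{q_1} = ∑_{τ=0}^{q_b - 1} C(p_a - 1 + τ, τ) z_{p_a + τ} (z_{p_{a-1}} ⋯ z_{p_1} ш z_{q_b - τ} z_{q_{b-1}} ⋯ z_{q_1}) + ∑_{τ=0}^{p_a - 1} C(q_b - 1 + τ, τ) z_{q_b + τ} (z_{p_a - τ} z_{p_{a-1}} ⋯ z_{p_1} ш z_{q_{b-1}} ⋯ z_{q_1}). -/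
/-!
Write `c` for the letter `x` and let `a`, `b` be arbitrary letters. A shuffle of `c^m a W₁` with
`c^n b W₂` starts with a block of `c`'s followed by `a` or by `b`. If `a` comes first, after
`m + j` copies of `c`, the `j ≤ n` copies taken from the right factor interleave with the `m` from
the left in `C(m + j, j)` ways. Formally, both sides obey the defining recursion of `sh` in
`(m, n)`; at the step `(m + 1, n + 1)` this is Pascal's rule.
-/

/-- Words in the two letters `x` (encoded `true`) and `y` (encoded `false`). -/
abbrev Word : Type := List Bool

/-- The shuffle product on ℚ⟨x,y⟩, realized as the monoid algebra of words
with values in `Word →₀ ℚ`, defined recursively on words by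
`1 ш w = w ш 1 = w` and `(u₁ w₁) ш (u₂ w₂) = u₁(w₁ ш u₂ w₂) + u₂(u₁ w₁ ш w₂)`. -/
noncomputable def sh : Word → Word → (Word →₀ ℚ)
  | [], w => Finsupp.single w 1
  | (a :: w₁), [] => Finsupp.single (a :: w₁) 1
  | (a :: w₁), (b :: w₂) =>
      Finsupp.mapDomain (a :: ·) (sh w₁ (b :: w₂)) +
      Finsupp.mapDomain (b :: ·) (sh (a :: w₁) w₂)
  termination_by w v => w.length + v.length

/-- The word `z_p = x^{p-1} y`. -/
def zw (p : ℕ) : Word := List.replicate (p - 1) true ++ [false]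

/-- The word `z_{k_1} z_{k_2} ⋯ z_{k_n}` for a list of exponents `[k_1, …, k_n]`. -/
def wordOf (L : List ℕ) : Word := (L.map zw).flatten

open Finset

noncomputable def prepend (u : Word) : (Word →₀ ℚ) →ₗ[ℚ] Word →₀ ℚ :=
  Finsupp.lmapDomain ℚ ℚ (u ++ ·)

lemma prepend_nil (X : Word →₀ ℚ) : prepend [] X = X :=
  Finsupp.mapDomain_id

lemma prepend_prepend (u v : Word) (X : Word →₀ ℚ) :
    prepend u (prepend v X) = prepend (u ++ v) X := by
  simp only [prepend, Finsupp.lmapDomain_apply, ← Finsupp.mapDomain_comp]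
  congr 1
  funext w
  simp

lemma prepend_singleton_replicate (c : Bool) (k : ℕ) (X : Word →₀ ℚ) :
    prepend [c] (prepend (List.replicate k c) X) = prepend (List.replicate (k + 1) c) X := by
  rw [prepend_prepend, List.replicate_succ, List.singleton_append]

lemma sh_cons_cons (a b : Bool) (w₁ w₂ : Word) :
    sh (a :: w₁) (b :: w₂) = prepend [a] (sh w₁ (b :: w₂)) + prepend [b] (sh (a :: w₁) w₂) := by
  rw [sh]
  rfl

lemma sh_replicate_succ_append_succ (c : Bool) (u v : Word) (m n : ℕ) :
    sh (List.replicate (m + 1) c ++ u) (List.replicate (n + 1) c ++ v) =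
      prepend [c] (sh (List.replicate m c ++ u) (List.replicate (n + 1) c ++ v)) +
      prepend [c] (sh (List.replicate (m + 1) c ++ u) (List.replicate n c ++ v)) :=
  sh_cons_cons c c _ _

/-- The terms of `c^m A ш c^n B` in which the first letter of `A` follows `m + j` copies of `c`;
`Y (n - j)` stands for that letter times the shuffle of the rest. -/
noncomputable def interleaveSum (c : Bool) (m n : ℕ) (Y : ℕ → Word →₀ ℚ) : Word →₀ ℚ :=
  ∑ j ∈ range (n + 1), ((m + j).choose j : ℚ) • prepend (List.replicate (m + j) c) (Y (n - j))

section interleaveSum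

variable (c : Bool) (Y : ℕ → Word →₀ ℚ)

lemma interleaveSum_zero_zero : interleaveSum c 0 0 Y = Y 0 := by
  simp [interleaveSum, prepend_nil]

lemma interleaveSum_succ_zero (m : ℕ) :
    interleaveSum c (m + 1) 0 Y = prepend [c] (interleaveSum c m 0 Y) := by
  simp [interleaveSum, prepend_singleton_replicate]

lemma interleaveSum_zero_succ (n : ℕ) :
    interleaveSum c 0 (n + 1) Y = Y (n + 1) + prepend [c] (interleaveSum c 0 n Y) := by
  rw [interleaveSum, sum_range_succ']
  simp [interleaveSum, prepend_nil, prepend_singleton_replicate, map_sum, add_comm]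

lemma interleaveSum_succ_succ (m n : ℕ) :
    interleaveSum c (m + 1) (n + 1) Y =
      prepend [c] (interleaveSum c m (n + 1) Y + interleaveSum c (m + 1) n Y) := by
  have pascal : ∀ j, ((m + 1 + (j + 1)).choose (j + 1) : ℚ) =
      (m + (j + 1)).choose (j + 1) + (m + 1 + j).choose j := by
    intro j
    rw [show m + 1 + (j + 1) = m + 1 + j + 1 by omega, Nat.choose_succ_succ', add_comm,
      show m + 1 + j = m + (j + 1) by omega]
    push_cast
    ring
  simp only [interleaveSum, map_add, map_sum, map_smul, prepend_singleton_replicate]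
  rw [sum_range_succ' _ (n + 1), sum_range_succ' (fun j => _ • prepend _ (Y (n + 1 - j))) (n + 1)]
  simp only [pascal, add_smul, sum_add_distrib]
  simp only [Nat.add_sub_add_right, Nat.choose_zero_right, add_zero, Nat.sub_zero,
    show ∀ j, m + (j + 1) + 1 = m + 1 + (j + 1) by omega, ← add_assoc (m + 1)]
  abel

end interleaveSum

lemma sh_replicate_append_cons (c a b : Bool) (W₁ W₂ : Word) (m n : ℕ) :
    sh (List.replicate m c ++ a :: W₁) (List.replicate n c ++ b :: W₂) =
      interleaveSum c m n (fun k => prepend [a] (sh W₁ (List.replicate k c ++ b :: W₂))) +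
      interleaveSum c n m (fun k => prepend [b] (sh (List.replicate k c ++ a :: W₁) W₂)) := by
  induction m generalizing n with
  | zero =>
    induction n with
    | zero =>
      rw [interleaveSum_zero_zero, interleaveSum_zero_zero]
      exact sh_cons_cons a b W₁ W₂
    | succ n ih =>
      rw [interleaveSum_zero_succ, interleaveSum_succ_zero, add_assoc, ← map_add, ← ih]
      exact sh_cons_cons a c W₁ _
  | succ m ihm =>
    induction n with
    | zero =>
      rw [interleaveSum_succ_zero, interleaveSum_zero_succ, add_left_comm, ← map_add, ← ihm]
      exact (sh_cons_cons c b _ W₂).trans (add_comm _ _)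
    | succ n ihn =>
      rw [sh_replicate_succ_append_succ, ihm, ihn, interleaveSum_succ_succ, interleaveSum_succ_succ]
      simp only [map_add]
      abel

lemma zw_succ_append (k : ℕ) (W : Word) : zw (k + 1) ++ W = List.replicate k true ++ false :: W := by
  simp [zw]

lemma sum_choose_zw_eq_interleaveSum (m n : ℕ) (f : ℕ → Word →₀ ℚ) :
    ∑ τ ∈ range (n + 1), ((m + 1 - 1 + τ).choose τ : ℚ) •
        Finsupp.mapDomain (fun w => zw (m + 1 + τ) ++ w) (f (n + 1 - τ)) =
      interleaveSum true m n (fun k => prepend [false] (f (k + 1))) := by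
  refine sum_congr rfl fun τ hτ => ?_
  rw [Nat.add_sub_cancel, show n + 1 - τ = n - τ + 1 by simp at hτ; omega, add_right_comm,
    prepend_prepend]
  simp [prepend, Finsupp.lmapDomain_apply, zw_succ_append]

/-- Here `ps` is the list `[p_{a-1}, …, p₁]` (outermost first) and `qs = [q_{b-1}, …, q₁]`. -/
theorem shuffle_step_general (p q : ℕ) (hp : 1 ≤ p) (hq : 1 ≤ q)
    (ps qs : List ℕ) :
    sh (zw p ++ wordOf ps) (zw q ++ wordOf qs) =
      (∑ τ ∈ Finset.range q, (Nat.choose (p - 1 + τ) τ : ℚ) •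
        Finsupp.mapDomain (fun w => zw (p + τ) ++ w)
          (sh (wordOf ps) (zw (q - τ) ++ wordOf qs))) +
      (∑ τ ∈ Finset.range p, (Nat.choose (q - 1 + τ) τ : ℚ) •
        Finsupp.mapDomain (fun w => zw (q + τ) ++ w)
          (sh (zw (p - τ) ++ wordOf ps) (wordOf qs))) := by
  obtain ⟨m, rfl⟩ := Nat.exists_eq_add_of_le' hp
  obtain ⟨n, rfl⟩ := Nat.exists_eq_add_of_le' hq
  rw [sum_choose_zw_eq_interleaveSum m n fun k => sh (wordOf ps) (zw k ++ wordOf qs),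
    sum_choose_zw_eq_interleaveSum n m fun k => sh (zw k ++ wordOf ps) (wordOf qs)]
  simp only [zw_succ_append]
  exact sh_replicate_append_cons true false false _ _ m n

/-- Proposition 2.2: the first step of the shuffle product procedure.  Here `ps`
is the list `[p_{a-1}, …, p₁]` (outermost first) and `qs = [q_{b-1}, …, q₁]`. -/
theorem shuffle_step (p q : ℕ) (hp : 1 ≤ p) (hq : 1 ≤ q)
    (ps qs : List ℕ) (hps : ∀ x ∈ ps, 1 ≤ x) (hqs : ∀ x ∈ qs, 1 ≤ x) :
    sh (zw p ++ wordOf ps) (zw q ++ wordOf qs) =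
      (∑ τ ∈ Finset.range q, (Nat.choose (p - 1 + τ) τ : ℚ) •
        Finsupp.mapDomain (fun w => zw (p + τ) ++ w)
          (sh (wordOf ps) (zw (q - τ) ++ wordOf qs))) +
      (∑ τ ∈ Finset.range p, (Nat.choose (q - 1 + τ) τ : ℚ) •
        Finsupp.mapDomain (fun w => zw (q + τ) ++ w)
          (sh (zw (p - τ) ++ wordOf ps) (wordOf qs))) :=
  shuffle_step_general p q hp hq ps qs
end

section
/- For integers p, r ≥ 2 and q ≥ 1, ζ(p)·ζ(r, q) = ∑_{i=0}^{r-1} C(p-1+i, i) ζ(p+i, r-i, q) + ∑_{i=0}^{p-1} C(r-1+i, i) [∑_{τ=0}^{q-1} C(p-i-1+τ, τ) ζ(r+i, p-i+τ, q-τ) + ∑_{τ=0}^{p-i-1} C(q-1+τ, τ) ζ(r+i, q+τ, p-i-τ)]. -/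
/-- The triple zeta value `ζ(k₁, k₂, k₃) = ∑_{m₁ > m₂ > m₃ > 0} ∏ m_j^{-k_j}`. -/
noncomputable def zeta3 (k₁ k₂ k₃ : ℕ) : ℝ :=
  ∑' (a : ℕ) (b : ℕ) (c : ℕ),
    1 / (((a : ℝ) + (b : ℝ) + (c : ℝ) + 3) ^ k₁ *
         ((b : ℝ) + (c : ℝ) + 2) ^ k₂ * ((c : ℝ) + 1) ^ k₃)

/-!
Multiplying out, `ζ(p) ζ(r, q)` is the sum of `n^{-p} m^{-r} l^{-q}` over `n ≥ 1`, `m > l ≥ 1`.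
In a commutative semiring, `u v = w (u + v)` forces
`u^p v^r = ∑_{i<r} C(p-1+i, i) w^{p+i} v^{r-i} + ∑_{i<p} C(r-1+i, i) w^{r+i} u^{p-i}`
(induction on `p + r` with Pascal's rule); for `u = 1/x`, `v = 1/y`, `w = 1/(x+y)` this is the
partial fraction expansion of `x^{-p} y^{-r}`. Expanding `n^{-p} m^{-r}` this way gives the terms
`ζ(p+i, r-i, q)`, summed over `n + m > m > l`, and terms `(n+m)^{-(r+i)} n^{-(p-i)} l^{-q}` in which
`n` and `l` are not yet ordered; expanding `n^{-(p-i)} l^{-q}` once more orders them below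
`n + l < n + m`. All rearrangements happen in `ℝ≥0∞`; the admissible triple zeta values are finite
there, so the identity descends to `ℝ`.
-/

open Finset ENNReal

section PartialFractions

variable {R : Type*} [CommSemiring R]

def choosePowSum (v w : R) (p r : ℕ) : R :=
  ∑ i ∈ range r, ((p - 1 + i).choose i : R) * (w ^ (p + i) * v ^ (r - i))

theorem choosePowSum_eq_mul_add (v w : R) {p r : ℕ} (hp : 2 ≤ p) (hr : 1 ≤ r) :
    choosePowSum v w p r = w * (choosePowSum v w (p - 1) r + choosePowSum v w p (r - 1)) := by
  obtain ⟨p, rfl⟩ : ∃ p', p = p' + 2 := ⟨p - 2, by omega⟩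
  obtain ⟨r, rfl⟩ : ∃ r', r = r' + 1 := ⟨r - 1, by omega⟩
  simp only [choosePowSum, mul_add, mul_sum, show p + 2 - 1 = p + 1 by omega,
    show p + 1 - 1 = p by omega, Nat.add_sub_cancel]
  rw [sum_range_succ' _ r, sum_range_succ' _ r, add_right_comm (∑ k ∈ range r, w * _),
    ← sum_add_distrib]
  congr 1
  · refine sum_congr rfl fun i _ => ?_
    rw [show p + 1 + (i + 1) = p + i + 1 + 1 by omega, Nat.choose_succ_succ', Nat.cast_add,
      show r + 1 - (i + 1) = r - i by omega]
    ring_nf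
  · simp only [Nat.choose_zero_right]
    ring

theorem pow_mul_eq_sum_of_mul_eq {u v w : R} (h : u * v = w * (u + v)) (p : ℕ) :
    u ^ p * v = w ^ p * v + ∑ i ∈ range p, w ^ (i + 1) * u ^ (p - i) := by
  induction p with
  | zero => simp
  | succ p ih =>
    have hsum : ∑ i ∈ range p, w ^ (i + 1) * u ^ (p + 1 - i)
        = u * ∑ i ∈ range p, w ^ (i + 1) * u ^ (p - i) := by
      rw [mul_sum]
      refine sum_congr rfl fun i hi => ?_
      rw [Nat.sub_add_comm (mem_range.1 hi).le, pow_succ]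
      ring
    calc u ^ (p + 1) * v = u * (u ^ p * v) := by ring
      _ = w ^ p * (u * v) + u * ∑ i ∈ range p, w ^ (i + 1) * u ^ (p - i) := by rw [ih]; ring
      _ = _ := by rw [h, sum_range_succ, hsum, Nat.add_sub_cancel_left]; ring

theorem pow_mul_eq_choosePowSum {u v w : R} (h : u * v = w * (u + v)) (p : ℕ) :
    u ^ p * v = choosePowSum v w p 1 + choosePowSum u w 1 p := by
  simp [choosePowSum, pow_mul_eq_sum_of_mul_eq h, add_comm 1]

theorem pow_mul_pow_eq_choosePowSum {u v w : R} (h : u * v = w * (u + v)) {p r : ℕ}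
    (hp : 1 ≤ p) (hr : 1 ≤ r) :
    u ^ p * v ^ r = choosePowSum v w p r + choosePowSum u w r p := by
  induction p, hp using Nat.le_induction generalizing r with
  | base =>
    rw [pow_one, mul_comm, add_comm]
    exact pow_mul_eq_choosePowSum (by rw [mul_comm, h, add_comm]) r
  | succ p hp ihp =>
    induction r, hr using Nat.le_induction with
    | base => rw [pow_one]; exact pow_mul_eq_choosePowSum h (p + 1)
    | succ r hr ihr =>
      rw [choosePowSum_eq_mul_add v w (by omega) (by omega),
        choosePowSum_eq_mul_add u w (by omega) (by omega), Nat.add_sub_cancel, Nat.add_sub_cancel]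
      calc u ^ (p + 1) * v ^ (r + 1) = u ^ p * v ^ r * (u * v) := by ring
        _ = w * (u ^ p * v ^ (r + 1) + u ^ (p + 1) * v ^ r) := by rw [h]; ring
        _ = _ := by rw [ihp (by omega), ihr]; ring

end PartialFractions

theorem ENNReal.inv_mul_inv_eq_inv_add_mul (x y : ℝ≥0∞) : x⁻¹ * y⁻¹ = (x + y)⁻¹ * (x⁻¹ + y⁻¹) := by
  rcases eq_or_ne x ⊤ with rfl | hx
  · simp
  rcases eq_or_ne y ⊤ with rfl | hy
  · simp
  rcases eq_or_ne x 0 with rfl | hx0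
  · simp [hy, ENNReal.mul_top]
  rcases eq_or_ne y 0 with rfl | hy0
  · simp [hx, ENNReal.mul_top]
  lift x to NNReal using hx
  lift y to NNReal using hy
  replace hx0 : x ≠ 0 := by simpa using hx0
  replace hy0 : y ≠ 0 := by simpa using hy0
  have hxy : x + y ≠ 0 := by positivity
  rw [← ENNReal.coe_add, ← ENNReal.coe_inv hx0, ← ENNReal.coe_inv hy0, ← ENNReal.coe_inv hxy]
  norm_cast
  field_simp
  ring

theorem inv_natCast_pow_mul_inv_natCast_pow (X Y : ℕ) {p r : ℕ} (hp : 1 ≤ p) (hr : 1 ≤ r) :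
    (X : ℝ≥0∞)⁻¹ ^ p * (Y : ℝ≥0∞)⁻¹ ^ r =
      choosePowSum (Y : ℝ≥0∞)⁻¹ ((X + Y : ℕ) : ℝ≥0∞)⁻¹ p r +
        choosePowSum (X : ℝ≥0∞)⁻¹ ((X + Y : ℕ) : ℝ≥0∞)⁻¹ r p :=
  pow_mul_pow_eq_choosePowSum (by rw [Nat.cast_add, ENNReal.inv_mul_inv_eq_inv_add_mul]) hp hr

-- Versions in `ℝ≥0∞` of `zeta1`, `zeta2`, `zeta3`, where every series can be reordered freely.
noncomputable def zeta1ENNReal (k : ℕ) : ℝ≥0∞ := ∑' n : ℕ, ((n + 1 : ℕ) : ℝ≥0∞)⁻¹ ^ k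

noncomputable def zeta2ENNReal (k₁ k₂ : ℕ) : ℝ≥0∞ :=
  ∑' (a : ℕ) (b : ℕ), ((a + b + 2 : ℕ) : ℝ≥0∞)⁻¹ ^ k₁ * ((b + 1 : ℕ) : ℝ≥0∞)⁻¹ ^ k₂

noncomputable def zeta3ENNReal (k₁ k₂ k₃ : ℕ) : ℝ≥0∞ :=
  ∑' (a : ℕ) (b : ℕ) (c : ℕ), ((a + b + c + 3 : ℕ) : ℝ≥0∞)⁻¹ ^ k₁ *
    ((b + c + 2 : ℕ) : ℝ≥0∞)⁻¹ ^ k₂ * ((c + 1 : ℕ) : ℝ≥0∞)⁻¹ ^ k₃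

-- `∑ m^{-k} x^{-s} y^{-q}` over `x, y ≥ 1` and `m > x + y`,
-- written with `x = n + 1`, `y = b + 1`, `m = x + y + a + 1`.
noncomputable def zetaForkENNReal (k s q : ℕ) : ℝ≥0∞ :=
  ∑' (n : ℕ) (a : ℕ) (b : ℕ), ((n + a + b + 3 : ℕ) : ℝ≥0∞)⁻¹ ^ k *
    (((n + 1 : ℕ) : ℝ≥0∞)⁻¹ ^ s * ((b + 1 : ℕ) : ℝ≥0∞)⁻¹ ^ q)

theorem zeta1ENNReal_mul_zeta2ENNReal {p r : ℕ} (hp : 1 ≤ p) (hr : 1 ≤ r) (q : ℕ) :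
    zeta1ENNReal p * zeta2ENNReal r q =
      (∑ i ∈ range r, ((p - 1 + i).choose i : ℝ≥0∞) * zeta3ENNReal (p + i) (r - i) q) +
        ∑ i ∈ range p, ((r - 1 + i).choose i : ℝ≥0∞) * zetaForkENNReal (r + i) (p - i) q := by
  have h : ∀ n a b : ℕ, ((n + 1 : ℕ) : ℝ≥0∞)⁻¹ ^ p *
      (((a + b + 2 : ℕ) : ℝ≥0∞)⁻¹ ^ r * ((b + 1 : ℕ) : ℝ≥0∞)⁻¹ ^ q) =
      (∑ i ∈ range r, ((p - 1 + i).choose i : ℝ≥0∞) * (((n + a + b + 3 : ℕ) : ℝ≥0∞)⁻¹ ^ (p + i) *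
        ((a + b + 2 : ℕ) : ℝ≥0∞)⁻¹ ^ (r - i) * ((b + 1 : ℕ) : ℝ≥0∞)⁻¹ ^ q)) +
      ∑ i ∈ range p, ((r - 1 + i).choose i : ℝ≥0∞) * (((n + a + b + 3 : ℕ) : ℝ≥0∞)⁻¹ ^ (r + i) *
        (((n + 1 : ℕ) : ℝ≥0∞)⁻¹ ^ (p - i) * ((b + 1 : ℕ) : ℝ≥0∞)⁻¹ ^ q)) := by
    intro n a b
    rw [← mul_assoc, inv_natCast_pow_mul_inv_natCast_pow _ _ hp hr,
      show n + 1 + (a + b + 2) = n + a + b + 3 by omega, choosePowSum, choosePowSum, add_mul,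
      sum_mul, sum_mul]
    congr 1 <;> exact sum_congr rfl fun i _ => by ring
  rw [zeta1ENNReal, zeta2ENNReal, ← ENNReal.tsum_mul_right]
  simp_rw [← ENNReal.tsum_mul_left, h, ENNReal.tsum_add,
    Summable.tsum_finsetSum fun _ _ => ENNReal.summable, ENNReal.tsum_mul_left]
  rfl

theorem zetaForkENNReal_eq (k : ℕ) {s q : ℕ} (hs : 1 ≤ s) (hq : 1 ≤ q) :
    zetaForkENNReal k s q =
      (∑ τ ∈ range q, ((s - 1 + τ).choose τ : ℝ≥0∞) * zeta3ENNReal k (s + τ) (q - τ)) +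
        ∑ τ ∈ range s, ((q - 1 + τ).choose τ : ℝ≥0∞) * zeta3ENNReal k (q + τ) (s - τ) := by
  have h : ∀ n a b : ℕ, ((n + a + b + 3 : ℕ) : ℝ≥0∞)⁻¹ ^ k *
      (((n + 1 : ℕ) : ℝ≥0∞)⁻¹ ^ s * ((b + 1 : ℕ) : ℝ≥0∞)⁻¹ ^ q) =
      (∑ τ ∈ range q, ((s - 1 + τ).choose τ : ℝ≥0∞) * (((a + n + b + 3 : ℕ) : ℝ≥0∞)⁻¹ ^ k *
        ((n + b + 2 : ℕ) : ℝ≥0∞)⁻¹ ^ (s + τ) * ((b + 1 : ℕ) : ℝ≥0∞)⁻¹ ^ (q - τ))) +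
      ∑ τ ∈ range s, ((q - 1 + τ).choose τ : ℝ≥0∞) * (((a + b + n + 3 : ℕ) : ℝ≥0∞)⁻¹ ^ k *
        ((b + n + 2 : ℕ) : ℝ≥0∞)⁻¹ ^ (q + τ) * ((n + 1 : ℕ) : ℝ≥0∞)⁻¹ ^ (s - τ)) := by
    intro n a b
    rw [inv_natCast_pow_mul_inv_natCast_pow _ _ hs hq, show n + 1 + (b + 1) = n + b + 2 by omega,
      show a + n + b + 3 = n + a + b + 3 by omega, show a + b + n + 3 = n + a + b + 3 by omega,
      show b + n + 2 = n + b + 2 by omega, choosePowSum, choosePowSum, mul_add, mul_sum, mul_sum]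
    congr 1 <;> exact sum_congr rfl fun i _ => by ring
  rw [zetaForkENNReal]
  simp_rw [h, ENNReal.tsum_add, Summable.tsum_finsetSum fun _ _ => ENNReal.summable,
    ENNReal.tsum_mul_left]
  congr 1
  · refine sum_congr rfl fun τ _ => ?_
    rw [ENNReal.tsum_comm]
    rfl
  · refine sum_congr rfl fun τ _ => ?_
    rw [ENNReal.tsum_comm]
    exact congrArg _ (tsum_congr fun a => ENNReal.tsum_comm)

section ShuffleExpansion

variable {R S : Type*} [CommSemiring R] [CommSemiring S]

def shuffleExpansion (Z : ℕ → ℕ → ℕ → R) (p r q : ℕ) : R :=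
  (∑ i ∈ range r, ((p - 1 + i).choose i : R) * Z (p + i) (r - i) q) +
    ∑ i ∈ range p, ((r - 1 + i).choose i : R) *
      ((∑ τ ∈ range q, ((p - i - 1 + τ).choose τ : R) * Z (r + i) (p - i + τ) (q - τ)) +
        ∑ τ ∈ range (p - i), ((q - 1 + τ).choose τ : R) * Z (r + i) (q + τ) (p - i - τ))

theorem map_shuffleExpansion (f : R →+* S) (Z : ℕ → ℕ → ℕ → R) (p r q : ℕ) :
    f (shuffleExpansion Z p r q) = shuffleExpansion (fun k₁ k₂ k₃ => f (Z k₁ k₂ k₃)) p r q := by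
  simp [shuffleExpansion, map_sum]

theorem shuffleExpansion_congr {Z Z' : ℕ → ℕ → ℕ → R} {p r q : ℕ} (hp : 2 ≤ p) (hr : 2 ≤ r)
    (hq : 1 ≤ q) (h : ∀ k₁ k₂ k₃, 2 ≤ k₁ → 1 ≤ k₂ → 1 ≤ k₃ → Z k₁ k₂ k₃ = Z' k₁ k₂ k₃) :
    shuffleExpansion Z p r q = shuffleExpansion Z' p r q := by
  unfold shuffleExpansion
  congr 1
  · exact sum_congr rfl fun i hi => by rw [h _ _ _ (by omega) (by simp at hi; omega) hq]
  · refine sum_congr rfl fun i hi => ?_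
    simp only [mem_range] at hi
    congr 2
    · exact sum_congr rfl fun τ hτ => by rw [h _ _ _ (by omega) (by omega) (by simp at hτ; omega)]
    · exact sum_congr rfl fun τ hτ => by rw [h _ _ _ (by omega) (by omega) (by simp at hτ; omega)]

end ShuffleExpansion

theorem zeta1ENNReal_mul_zeta2ENNReal_eq_shuffleExpansion {p r q : ℕ} (hp : 1 ≤ p) (hr : 1 ≤ r)
    (hq : 1 ≤ q) : zeta1ENNReal p * zeta2ENNReal r q = shuffleExpansion zeta3ENNReal p r q := by
  rw [zeta1ENNReal_mul_zeta2ENNReal hp hr, shuffleExpansion]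
  congr 1
  exact sum_congr rfl fun i hi => by rw [zetaForkENNReal_eq _ (by simp at hi; omega) hq]

theorem toReal_shuffleExpansion {Z : ℕ → ℕ → ℕ → ℝ≥0∞} {p r q : ℕ} (hp : 2 ≤ p) (hr : 2 ≤ r)
    (hq : 1 ≤ q) (hZ : ∀ k₁ k₂ k₃, 2 ≤ k₁ → 1 ≤ k₂ → 1 ≤ k₃ → Z k₁ k₂ k₃ ≠ ∞) :
    (shuffleExpansion Z p r q).toReal =
      shuffleExpansion (fun k₁ k₂ k₃ => (Z k₁ k₂ k₃).toReal) p r q := by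
  -- `toReal` is not additive on `ℝ≥0∞`, so pass through `ℝ≥0`, where it is a ring hom.
  have hlift : shuffleExpansion Z p r q =
      ENNReal.ofNNRealHom (shuffleExpansion (fun k₁ k₂ k₃ => (Z k₁ k₂ k₃).toNNReal) p r q) := by
    rw [map_shuffleExpansion]
    exact shuffleExpansion_congr hp hr hq fun k₁ k₂ k₃ h₁ h₂ h₃ =>
      (coe_toNNReal (hZ k₁ k₂ k₃ h₁ h₂ h₃)).symm
  rw [hlift]
  exact map_shuffleExpansion NNReal.toRealHom (fun k₁ k₂ k₃ => (Z k₁ k₂ k₃).toNNReal) p r q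

theorem tsum_inv_pow_le {k : ℕ} (hk : 2 ≤ k) (N : ℕ) :
    ∑' a : ℕ, ((a + N + 1 : ℕ) : ℝ≥0∞)⁻¹ ^ k ≤ 2 * ((N + 1 : ℕ) : ℝ≥0∞)⁻¹ := by
  refine ENNReal.tsum_le_of_sum_range_le fun n => ?_
  have hreal : ∑ a ∈ range n, (((a + (N + 1) : ℕ) : ℝ) ^ 2)⁻¹ ≤ 2 / ((N + 1 : ℕ) : ℝ) := by
    calc _ = ∑ i ∈ Ioo N (n + (N + 1)), ((i : ℝ) ^ 2)⁻¹ := by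
          rw [range_eq_Ico, sum_Ico_add' (fun i : ℕ => ((i : ℝ) ^ 2)⁻¹) 0 n (N + 1), zero_add,
            Ico_add_one_left_eq_Ioo]
      _ ≤ _ := by exact_mod_cast sum_Ioo_inv_sq_le N _
  calc ∑ a ∈ range n, ((a + N + 1 : ℕ) : ℝ≥0∞)⁻¹ ^ k
      ≤ ∑ a ∈ range n, ((a + N + 1 : ℕ) : ℝ≥0∞)⁻¹ ^ 2 := by
        refine sum_le_sum fun a _ => ?_
        exact pow_le_pow_right_of_le_one' (ENNReal.inv_le_one.2 (Nat.one_le_cast.2 (by omega))) hk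
    _ = ENNReal.ofReal (∑ a ∈ range n, (((a + (N + 1) : ℕ) : ℝ) ^ 2)⁻¹) := by
        rw [ENNReal.ofReal_sum_of_nonneg (fun _ _ => by positivity)]
        refine sum_congr rfl fun a _ => ?_
        rw [ENNReal.ofReal_inv_of_pos (by positivity), ENNReal.ofReal_pow (by positivity),
          ofReal_natCast, ENNReal.inv_pow]
        rfl
    _ ≤ ENNReal.ofReal (2 / ((N + 1 : ℕ) : ℝ)) := ENNReal.ofReal_le_ofReal hreal
    _ = 2 * ((N + 1 : ℕ) : ℝ≥0∞)⁻¹ := by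
        rw [ENNReal.ofReal_div_of_pos (by positivity), ofReal_natCast, ENNReal.ofReal_ofNat,
          div_eq_mul_inv]

theorem tsum_inv_pow_mul_inv_pow_le {k : ℕ} (hk : 2 ≤ k) (N j : ℕ) :
    ∑' a : ℕ, ((a + N + 1 : ℕ) : ℝ≥0∞)⁻¹ ^ k * (N : ℝ≥0∞)⁻¹ ^ j ≤ 2 * (N : ℝ≥0∞)⁻¹ ^ (j + 1) := by
  rw [ENNReal.tsum_mul_right, pow_succ', ← mul_assoc]
  gcongr
  calc _ ≤ 2 * ((N + 1 : ℕ) : ℝ≥0∞)⁻¹ := tsum_inv_pow_le hk N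
    _ ≤ 2 * (N : ℝ≥0∞)⁻¹ := by gcongr; simp

theorem zeta1ENNReal_le_two {k : ℕ} (hk : 2 ≤ k) : zeta1ENNReal k ≤ 2 := by
  simpa [zeta1ENNReal] using tsum_inv_pow_le hk 0

theorem zeta2ENNReal_le {k₁ : ℕ} (hk₁ : 2 ≤ k₁) (k₂ : ℕ) :
    zeta2ENNReal k₁ k₂ ≤ 2 * zeta1ENNReal (k₂ + 1) := by
  rw [zeta2ENNReal, ENNReal.tsum_comm, zeta1ENNReal, ← ENNReal.tsum_mul_left]
  exact ENNReal.tsum_le_tsum fun b => tsum_inv_pow_mul_inv_pow_le hk₁ (b + 1) k₂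

theorem zeta3ENNReal_le {k₁ : ℕ} (hk₁ : 2 ≤ k₁) (k₂ k₃ : ℕ) :
    zeta3ENNReal k₁ k₂ k₃ ≤ 2 * zeta2ENNReal (k₂ + 1) k₃ := by
  rw [zeta3ENNReal, ENNReal.tsum_comm, zeta2ENNReal, ← ENNReal.tsum_mul_left]
  refine ENNReal.tsum_le_tsum fun b => ?_
  rw [ENNReal.tsum_comm, ← ENNReal.tsum_mul_left]
  refine ENNReal.tsum_le_tsum fun c => ?_
  rw [ENNReal.tsum_mul_right, ← mul_assoc]
  gcongr
  have h := tsum_inv_pow_mul_inv_pow_le hk₁ (b + c + 2) k₂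
  simpa only [show ∀ a, a + (b + c + 2) + 1 = a + b + c + 3 by omega] using h

theorem zeta2ENNReal_ne_top {k₁ k₂ : ℕ} (hk₁ : 2 ≤ k₁) (hk₂ : 1 ≤ k₂) : zeta2ENNReal k₁ k₂ ≠ ∞ :=
  ((zeta2ENNReal_le hk₁ k₂).trans_lt
    (mul_lt_top (by simp) ((zeta1ENNReal_le_two (by omega)).trans_lt (by simp)))).ne

theorem zeta3ENNReal_ne_top {k₁ k₂ k₃ : ℕ} (hk₁ : 2 ≤ k₁) (hk₂ : 1 ≤ k₂) (hk₃ : 1 ≤ k₃) :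
    zeta3ENNReal k₁ k₂ k₃ ≠ ∞ :=
  ((zeta3ENNReal_le hk₁ k₂ k₃).trans_lt
    (mul_lt_top (by simp) (zeta2ENNReal_ne_top (k₁ := k₂ + 1) (by omega) hk₃).lt_top)).ne

theorem ENNReal.toReal_tsum_of_ne_top {α : Type*} {f : α → ℝ≥0∞} (hf : ∑' a, f a ≠ ∞) :
    (∑' a, f a).toReal = ∑' a, (f a).toReal :=
  ENNReal.tsum_toReal_eq (ENNReal.ne_top_of_tsum_ne_top hf)

theorem zeta1_eq_toReal (k : ℕ) : zeta1 k = (zeta1ENNReal k).toReal := by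
  rw [zeta1ENNReal, ENNReal.tsum_toReal_eq fun _ => by simp]
  refine tsum_congr fun n => ?_
  simp only [toReal_pow, toReal_inv, toReal_natCast]
  push_cast
  ring

theorem zeta2_eq_toReal {k₁ k₂ : ℕ} (h : zeta2ENNReal k₁ k₂ ≠ ∞) :
    zeta2 k₁ k₂ = (zeta2ENNReal k₁ k₂).toReal := by
  rw [zeta2ENNReal] at h ⊢
  rw [ENNReal.toReal_tsum_of_ne_top h]
  refine tsum_congr fun a => ?_
  rw [ENNReal.toReal_tsum_of_ne_top (ENNReal.ne_top_of_tsum_ne_top h a)]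
  refine tsum_congr fun b => ?_
  simp only [toReal_mul, toReal_pow, toReal_inv, toReal_natCast]
  push_cast
  ring

theorem zeta3_eq_toReal {k₁ k₂ k₃ : ℕ} (h : zeta3ENNReal k₁ k₂ k₃ ≠ ∞) :
    zeta3 k₁ k₂ k₃ = (zeta3ENNReal k₁ k₂ k₃).toReal := by
  rw [zeta3ENNReal] at h ⊢
  rw [ENNReal.toReal_tsum_of_ne_top h]
  refine tsum_congr fun a => ?_
  have ha := ENNReal.ne_top_of_tsum_ne_top h a
  rw [ENNReal.toReal_tsum_of_ne_top ha]
  refine tsum_congr fun b => ?_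
  rw [ENNReal.toReal_tsum_of_ne_top (ENNReal.ne_top_of_tsum_ne_top ha b)]
  refine tsum_congr fun c => ?_
  simp only [toReal_mul, toReal_pow, toReal_inv, toReal_natCast]
  push_cast
  ring

theorem shuffle_expansion_triple (p r q : ℕ) (hp : 2 ≤ p) (hr : 2 ≤ r) (hq : 1 ≤ q) :
    zeta1 p * zeta2 r q =
      (∑ i ∈ Finset.range r, (Nat.choose (p - 1 + i) i : ℝ) * zeta3 (p + i) (r - i) q) +
      (∑ i ∈ Finset.range p, (Nat.choose (r - 1 + i) i : ℝ) *
        ((∑ τ ∈ Finset.range q, (Nat.choose (p - i - 1 + τ) τ : ℝ) *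
            zeta3 (r + i) (p - i + τ) (q - τ)) +
         (∑ τ ∈ Finset.range (p - i), (Nat.choose (q - 1 + τ) τ : ℝ) *
            zeta3 (r + i) (q + τ) (p - i - τ)))) := by
  have hζ₃ : ∀ k₁ k₂ k₃, 2 ≤ k₁ → 1 ≤ k₂ → 1 ≤ k₃ → zeta3ENNReal k₁ k₂ k₃ ≠ ∞ :=
    fun _ _ _ => zeta3ENNReal_ne_top
  rw [zeta1_eq_toReal, zeta2_eq_toReal (zeta2ENNReal_ne_top hr hq), ← toReal_mul,
    zeta1ENNReal_mul_zeta2ENNReal_eq_shuffleExpansion (by omega) (by omega) hq,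
    toReal_shuffleExpansion hp hr hq hζ₃]
  exact shuffleExpansion_congr hp hr hq fun k₁ k₂ k₃ h₁ h₂ h₃ =>
    (zeta3_eq_toReal (hζ₃ k₁ k₂ k₃ h₁ h₂ h₃)).symm
end

section
/- 6ζ(3,1,1) + ζ(2,2,1) = ζ(4,1) + ζ(2,3). -/
open scoped ENNReal
open Finset

/-- With `X, Y, Z, S, T` the reciprocals of `x, y, z, x + y, x + z`, this is the partial fraction
expansion of `1/(x²y²z)` behind the shuffle product `ζ(2) ⧢ ζ(2,1)`. -/
theorem sq_mul_sq_mul_eq_of_mul_eq_mul_add {R : Type*} [CommSemiring R] {X Y Z S T : R}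
    (hXY : X * Y = S * (X + Y)) (hXZ : X * Z = T * (X + Z)) :
    X ^ 2 * Y ^ 2 * Z = 2 * (S ^ 3 * T * X) + 2 * (S ^ 3 * T * Z) + S ^ 2 * T * X ^ 2
      + S ^ 2 * T ^ 2 * X + S ^ 2 * T ^ 2 * Z + 2 * (S ^ 3 * Y * Z) + S ^ 2 * Y ^ 2 * Z := by
  calc X ^ 2 * Y ^ 2 * Z
      = (X * Y) ^ 2 * Z := by ring
    _ = (S * (X + Y)) ^ 2 * Z := by rw [hXY]
    _ = S ^ 2 * Y ^ 2 * Z + 2 * S ^ 2 * (X * Y) * Z + S ^ 2 * X * (X * Z) := by ring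
    _ = S ^ 2 * Y ^ 2 * Z + 2 * S ^ 2 * (S * (X + Y)) * Z + S ^ 2 * X * (T * (X + Z)) := by
        rw [hXY, hXZ]
    _ = S ^ 2 * Y ^ 2 * Z + 2 * S ^ 3 * Y * Z + 2 * S ^ 3 * (X * Z)
        + S ^ 2 * T * X ^ 2 + S ^ 2 * T * (X * Z) := by ring
    _ = S ^ 2 * Y ^ 2 * Z + 2 * S ^ 3 * Y * Z + 2 * S ^ 3 * (T * (X + Z))
        + S ^ 2 * T * X ^ 2 + S ^ 2 * T * (T * (X + Z)) := by rw [hXZ]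
    _ = _ := by ring

noncomputable def recip (n : ℕ) : ℝ≥0∞ := (n : ℝ≥0∞)⁻¹

lemma recip_mul (m n : ℕ) : recip (m * n) = recip m * recip n := by
  simp only [recip, Nat.cast_mul]
  exact ENNReal.mul_inv (.inr (ENNReal.natCast_ne_top n)) (.inl (ENNReal.natCast_ne_top m))

lemma recip_pow (n k : ℕ) : recip (n ^ k) = recip n ^ k := by
  simp only [recip, Nat.cast_pow, ENNReal.inv_pow]

lemma recip_one : recip 1 = 1 := by simp [recip]

lemma recip_ne_top {n : ℕ} (hn : n ≠ 0) : recip n ≠ ∞ := by simpa [recip] using hn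

lemma recip_le_recip {m n : ℕ} (h : m ≤ n) : recip n ≤ recip m :=
  ENNReal.inv_le_inv.2 (by exact_mod_cast h)

lemma toReal_recip (n : ℕ) : (recip n).toReal = (n : ℝ)⁻¹ := by simp [recip]

lemma recip_mul_recip {x y : ℕ} (hx : x ≠ 0) (hy : y ≠ 0) :
    recip x * recip y = recip (x + y) * (recip x + recip y) := by
  have hxy : x + y ≠ 0 := by omega
  rw [← ENNReal.toReal_eq_toReal_iff' (by finiteness [recip_ne_top hx, recip_ne_top hy])
    (by finiteness [recip_ne_top hx, recip_ne_top hy, recip_ne_top hxy])]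
  simp only [ENNReal.toReal_mul, ENNReal.toReal_add (recip_ne_top hx) (recip_ne_top hy),
    toReal_recip]
  push_cast
  field_simp
  ring

lemma recip_eq_recip_mul_succ_add_recip_succ {n : ℕ} (hn : n ≠ 0) :
    recip n = recip (n * (n + 1)) + recip (n + 1) := by
  have h := recip_mul_recip hn one_ne_zero
  rw [recip_one, mul_one, mul_add, mul_one, mul_comm] at h
  rw [recip_mul]
  exact h

lemma tsum_recip_pow_le {N k : ℕ} (hN : N ≠ 0) (hk : 2 ≤ k) :
    ∑' a, recip ((a + N + 1) ^ k) ≤ recip N := by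
  have telescope : ∀ n, ∑ a ∈ range n, recip ((a + N) * (a + N + 1)) + recip (n + N) = recip N := by
    intro n
    induction n with
    | zero => simp
    | succ n ih =>
      rw [sum_range_succ, add_assoc, add_right_comm n 1 N,
        ← recip_eq_recip_mul_succ_add_recip_succ (by omega), ih]
  refine ENNReal.tsum_le_of_sum_range_le fun n => ?_
  calc ∑ a ∈ range n, recip ((a + N + 1) ^ k)
      ≤ ∑ a ∈ range n, recip ((a + N) * (a + N + 1)) := by
        refine sum_le_sum fun a _ => recip_le_recip ?_
        calc (a + N) * (a + N + 1) ≤ (a + N + 1) ^ 2 := by nlinarith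
          _ ≤ (a + N + 1) ^ k := Nat.pow_le_pow_right (by omega) hk
    _ ≤ recip N := telescope n ▸ le_self_add

lemma tsum_recip_pow_mul_le {N k M : ℕ} (hN : N ≠ 0) (hk : 2 ≤ k) :
    ∑' a, recip ((a + N + 1) ^ k * M) ≤ recip (N * M) := by
  simp only [recip_mul, ENNReal.tsum_mul_right]
  gcongr
  exact tsum_recip_pow_le hN hk

lemma tsum_ite_lt_eq (f : ℕ → ℝ≥0∞) (i : ℕ) :
    ∑' j, (if i < j then f j else 0) = ∑' d, f (i + d + 1) := by
  rw [← ENNReal.summable.sum_add_tsum_nat_add' (k := i + 1),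
    sum_eq_zero fun j hj => if_neg (by simp at hj; omega), zero_add]
  exact tsum_congr fun d => by rw [if_pos (by omega), add_right_comm, add_comm d]

lemma tsum_tsum_eq_add_diag_add (g : ℕ → ℕ → ℝ≥0∞) :
    ∑' (i : ℕ) (j : ℕ), g i j
      = ∑' (i : ℕ) (d : ℕ), g i (i + d + 1) + ∑' i, g i i
        + ∑' (j : ℕ) (d : ℕ), g (j + d + 1) j := by
  have trichotomy : ∀ i j, g i j = (if i < j then g i j else 0) + (if i = j then g i j else 0)
      + (if j < i then g i j else 0) := by
    intro i j
    rcases lt_trichotomy i j with h | rfl | h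
    · simp [h, h.ne, h.not_gt]
    · simp
    · simp [h, h.ne', h.not_gt]
  rw [tsum_congr₂ trichotomy]
  simp only [ENNReal.tsum_add, tsum_ite_lt_eq, tsum_ite_eq']
  rw [ENNReal.tsum_comm (f := fun i j => if j < i then g i j else 0)]
  simp only [tsum_ite_lt_eq]

lemma toReal_tsum_tsum {f : ℕ → ℕ → ℝ≥0∞} (h : ∑' (a : ℕ) (b : ℕ), f a b ≠ ∞) :
    (∑' (a : ℕ) (b : ℕ), f a b).toReal = ∑' (a : ℕ) (b : ℕ), (f a b).toReal := by
  rw [ENNReal.tsum_toReal_eq (ENNReal.ne_top_of_tsum_ne_top h)]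
  exact tsum_congr fun a =>
    ENNReal.tsum_toReal_eq (ENNReal.ne_top_of_tsum_ne_top (ENNReal.ne_top_of_tsum_ne_top h a))

/- Summing the smallest index outermost makes every rearrangement in the stuffle product a mere
renaming of bound variables. -/

noncomputable def ennZeta1 (s : ℕ) : ℝ≥0∞ := ∑' c : ℕ, recip ((c + 1) ^ s)

noncomputable def ennZeta2 (p q : ℕ) : ℝ≥0∞ :=
  ∑' (b : ℕ) (a : ℕ), recip ((a + b + 2) ^ p * (b + 1) ^ q)

noncomputable def zeta3Term (k₁ k₂ k₃ c b a : ℕ) : ℝ≥0∞ :=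
  recip ((a + b + c + 3) ^ k₁ * (b + c + 2) ^ k₂ * (c + 1) ^ k₃)

noncomputable def ennZeta3 (k₁ k₂ k₃ : ℕ) : ℝ≥0∞ :=
  ∑' (c : ℕ) (b : ℕ) (a : ℕ), zeta3Term k₁ k₂ k₃ c b a

lemma tsum_zeta3Term (k₁ k₂ k₃ : ℕ) :
    ∑' (x : ℕ) (y : ℕ) (z : ℕ), zeta3Term k₁ k₂ k₃ x y z = ennZeta3 k₁ k₂ k₃ :=
  rfl

lemma tsum_zeta3Term_swap (k₁ k₂ k₃ : ℕ) :
    ∑' (x : ℕ) (y : ℕ) (z : ℕ), zeta3Term k₁ k₂ k₃ y x z = ennZeta3 k₁ k₂ k₃ :=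
  ENNReal.tsum_comm

lemma tsum_zeta3Term_rotate (k₁ k₂ k₃ : ℕ) :
    ∑' (x : ℕ) (y : ℕ) (z : ℕ), zeta3Term k₁ k₂ k₃ y z x = ennZeta3 k₁ k₂ k₃ :=
  ENNReal.tsum_comm.trans (tsum_congr fun _ => ENNReal.tsum_comm)

lemma ennZeta1_mul_ennZeta2 (s p q : ℕ) :
    ennZeta1 s * ennZeta2 p q
      = ∑' (k : ℕ) (b : ℕ) (a : ℕ), recip ((k + 1) ^ s * ((a + b + 2) ^ p * (b + 1) ^ q)) := by
  rw [ennZeta1, ← ENNReal.tsum_mul_right]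
  simp only [ennZeta2, ← ENNReal.tsum_mul_left, recip_mul]

theorem ennZeta1_mul_ennZeta2_eq_stuffle (s p q : ℕ) :
    ennZeta1 s * ennZeta2 p q = ennZeta3 p q s + ennZeta2 p (q + s)
      + (ennZeta3 p s q + ennZeta2 (s + p) q + ennZeta3 s p q) := by
  let F (k a b : ℕ) : ℝ≥0∞ := recip ((k + 1) ^ s * ((a + b + 2) ^ p * (b + 1) ^ q))
  -- compare `k` with `b`, then, when `k > b`, compare `k - b - 1` with `a`
  rw [ennZeta1_mul_ennZeta2, tsum_tsum_eq_add_diag_add (fun k b => ∑' a, F k a b),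
    tsum_congr fun b => tsum_tsum_eq_add_diag_add (fun d a => F (b + d + 1) a b)]
  simp only [ENNReal.tsum_add, ennZeta2, ennZeta3, zeta3Term, F]
  congr 2
  · exact tsum_congr₂ fun _ _ => tsum_congr fun _ => congrArg recip (by ring)
  · exact tsum_congr₂ fun _ _ => congrArg recip (by ring)
  · congr 1
    · exact tsum_congr₂ fun _ _ => tsum_congr fun _ => congrArg recip (by ring)
    · exact tsum_congr₂ fun _ _ => congrArg recip (by ring)
  · exact tsum_congr₂ fun _ _ => tsum_congr fun _ => congrArg recip (by ring)

lemma recip_sq_mul_sq_mul_eq_shuffle (k b a : ℕ) :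
    recip ((k + 1) ^ 2 * ((a + b + 2) ^ 2 * (b + 1) ^ 1))
      = 2 * zeta3Term 3 1 1 k b a + 2 * zeta3Term 3 1 1 b k a + zeta3Term 2 1 2 k b a
        + zeta3Term 2 2 1 k b a + zeta3Term 2 2 1 b k a + 2 * zeta3Term 3 1 1 b a k
        + zeta3Term 2 2 1 b a k := by
  have h := sq_mul_sq_mul_eq_of_mul_eq_mul_add
    (recip_mul_recip (x := k + 1) (y := a + b + 2) (by omega) (by omega))
    (recip_mul_recip (x := k + 1) (y := b + 1) (by omega) (by omega))
  simp only [zeta3Term, recip_mul, recip_pow]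
  ring_nf at h ⊢
  exact h

theorem ennZeta1_mul_ennZeta2_eq_shuffle :
    ennZeta1 2 * ennZeta2 2 1 = 6 * ennZeta3 3 1 1 + 3 * ennZeta3 2 2 1 + ennZeta3 2 1 2 := by
  rw [ennZeta1_mul_ennZeta2, tsum_congr₂ fun k b => tsum_congr fun a =>
    recip_sq_mul_sq_mul_eq_shuffle k b a]
  simp only [ENNReal.tsum_add, ENNReal.tsum_mul_left, tsum_zeta3Term, tsum_zeta3Term_swap,
    tsum_zeta3Term_rotate]
  ring

lemma ennZeta1_ne_top {s : ℕ} (hs : 2 ≤ s) : ennZeta1 s ≠ ∞ := by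
  rw [ennZeta1, tsum_eq_zero_add' ENNReal.summable]
  exact ENNReal.add_ne_top.2 ⟨recip_ne_top (by positivity),
    ne_top_of_le_ne_top (recip_ne_top one_ne_zero) (tsum_recip_pow_le one_ne_zero hs)⟩

lemma ennZeta2_le_ennZeta1 {p q : ℕ} (hp : 2 ≤ p) : ennZeta2 p q ≤ ennZeta1 (q + 1) := by
  refine ENNReal.tsum_le_tsum fun b => ?_
  calc ∑' a, recip ((a + b + 2) ^ p * (b + 1) ^ q)
      = ∑' a, recip ((a + (b + 1) + 1) ^ p * (b + 1) ^ q) :=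
        tsum_congr fun a => congrArg recip (by ring)
    _ ≤ recip ((b + 1) * (b + 1) ^ q) := tsum_recip_pow_mul_le (by omega) hp
    _ = recip ((b + 1) ^ (q + 1)) := congrArg recip (by ring)

lemma ennZeta3_le_ennZeta2 {k₁ k₂ k₃ : ℕ} (h₁ : 2 ≤ k₁) :
    ennZeta3 k₁ k₂ k₃ ≤ ennZeta2 (k₂ + 1) k₃ := by
  refine ENNReal.tsum_le_tsum fun c => ENNReal.tsum_le_tsum fun b => ?_
  calc ∑' a, zeta3Term k₁ k₂ k₃ c b a
      = ∑' a, recip ((a + (b + c + 2) + 1) ^ k₁ * ((b + c + 2) ^ k₂ * (c + 1) ^ k₃)) :=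
        tsum_congr fun a => congrArg recip (by ring)
    _ ≤ recip ((b + c + 2) * ((b + c + 2) ^ k₂ * (c + 1) ^ k₃)) :=
        tsum_recip_pow_mul_le (by omega) h₁
    _ = recip ((b + c + 2) ^ (k₂ + 1) * (c + 1) ^ k₃) := congrArg recip (by ring)

lemma ennZeta2_ne_top {p q : ℕ} (hp : 2 ≤ p) (hq : 1 ≤ q) : ennZeta2 p q ≠ ∞ :=
  ne_top_of_le_ne_top (ennZeta1_ne_top (by omega)) (ennZeta2_le_ennZeta1 hp)

lemma ennZeta3_ne_top {k₁ k₂ k₃ : ℕ} (h₁ : 2 ≤ k₁) (h₂ : 1 ≤ k₂) (h₃ : 1 ≤ k₃) :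
    ennZeta3 k₁ k₂ k₃ ≠ ∞ :=
  ne_top_of_le_ne_top (ennZeta2_ne_top (by omega) h₃) (ennZeta3_le_ennZeta2 h₁)

lemma toReal_ennZeta2 {p q : ℕ} (h : ennZeta2 p q ≠ ∞) : (ennZeta2 p q).toReal = zeta2 p q := by
  rw [ennZeta2, ENNReal.tsum_comm] at h ⊢
  rw [toReal_tsum_tsum h]
  refine tsum_congr₂ fun a b => ?_
  rw [toReal_recip]
  push_cast
  rw [one_div]

lemma toReal_ennZeta3 {k₁ k₂ k₃ : ℕ} (h : ennZeta3 k₁ k₂ k₃ ≠ ∞) :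
    (ennZeta3 k₁ k₂ k₃).toReal = zeta3 k₁ k₂ k₃ := by
  have reverse : ennZeta3 k₁ k₂ k₃ = ∑' (a : ℕ) (b : ℕ) (c : ℕ), zeta3Term k₁ k₂ k₃ c b a :=
    (tsum_congr fun _ => ENNReal.tsum_comm).trans
      (ENNReal.tsum_comm.trans (tsum_congr fun _ => ENNReal.tsum_comm))
  rw [reverse] at h ⊢
  rw [toReal_tsum_tsum h]
  refine tsum_congr₂ fun a b => ?_
  unfold zeta3Term
  rw [ENNReal.tsum_toReal_eq fun c => recip_ne_top (by positivity)]
  refine tsum_congr fun c => ?_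
  rw [toReal_recip]
  push_cast
  rw [one_div]

theorem double_shuffle_example :
    6 * zeta3 3 1 1 + zeta3 2 2 1 = zeta2 4 1 + zeta2 2 3 := by
  have h311 : ennZeta3 3 1 1 ≠ ∞ := ennZeta3_ne_top (by norm_num) le_rfl le_rfl
  have h221 : ennZeta3 2 2 1 ≠ ∞ := ennZeta3_ne_top le_rfl (by norm_num) le_rfl
  have h212 : ennZeta3 2 1 2 ≠ ∞ := ennZeta3_ne_top le_rfl le_rfl (by norm_num)
  have h41 : ennZeta2 4 1 ≠ ∞ := ennZeta2_ne_top (by norm_num) le_rfl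
  have h23 : ennZeta2 2 3 ≠ ∞ := ennZeta2_ne_top le_rfl (by norm_num)
  have key : 6 * ennZeta3 3 1 1 + ennZeta3 2 2 1 = ennZeta2 4 1 + ennZeta2 2 3 := by
    rw [← ENNReal.add_right_inj (a := 2 * ennZeta3 2 2 1 + ennZeta3 2 1 2)
      (ENNReal.add_ne_top.2 ⟨ENNReal.mul_ne_top ENNReal.ofNat_ne_top h221, h212⟩)]
    calc 2 * ennZeta3 2 2 1 + ennZeta3 2 1 2 + (6 * ennZeta3 3 1 1 + ennZeta3 2 2 1)
        = ennZeta1 2 * ennZeta2 2 1 := by rw [ennZeta1_mul_ennZeta2_eq_shuffle]; ring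
      _ = ennZeta3 2 1 2 + ennZeta2 2 3 + (ennZeta3 2 2 1 + ennZeta2 4 1 + ennZeta3 2 2 1) :=
        ennZeta1_mul_ennZeta2_eq_stuffle 2 2 1
      _ = 2 * ennZeta3 2 2 1 + ennZeta3 2 1 2 + (ennZeta2 4 1 + ennZeta2 2 3) := by ring
  rw [← toReal_ennZeta3 h311, ← toReal_ennZeta3 h221, ← toReal_ennZeta2 h41,
    ← toReal_ennZeta2 h23, ← ENNReal.toReal_ofNat 6, ← ENNReal.toReal_mul,
    ← ENNReal.toReal_add (ENNReal.mul_ne_top ENNReal.ofNat_ne_top h311) h221,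
    ← ENNReal.toReal_add h41 h23, key]
end
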